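/- arXiv:1611.02268 — 2 statements merged into one kernel-verified Lean document; each statement's English description precedes it below -/
import Mathlib

section
/- Let n, V, H be positive integers, E ∈ [−1,1]^{H×n} with columns e⁽ⁱ⁾, and B ∈ ℝ^{V×H} with rows b_v, such that there exists X ∈ [−1,1]^{V×n} with (1/n)·E·x_v = b_v for all v. Suppose for each v ∈ {1,…,V} the vector w_v* ∈ ℝ^H attains inf_{w ∈ ℝ^H} γ^E(w, b_v). Define reconstructions x̃_v⁽ⁱ⁾* = (1 − e^{−w_v*ᵀe⁽ⁱ⁾})/(1 + e^{−w_v*ᵀe⁽ⁱ⁾}) for each i ∈ {1,…,n} and v ∈ {1,…,V}. Then the worst-case loss of these reconstructions, namely the supremum over X ∈ [−1,1]^{V×n} satisfying (1/n)·E·x_v = b_v for all v of (1/n)·Σ_{i=1}^n ℓ(x⁽ⁱ⁾, x̃⁽ⁱ⁾*), equals (1/2)·Σ_{v=1}^V γ^E(w_v*, b_v); in particular these reconstructions attain the minimax value of the game. -/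
/-- The potential well `Ψ(m) = ln(1+eᵐ) + ln(1+e⁻ᵐ)`. -/
noncomputable def Psi (m : ℝ) : ℝ := Real.log (1 + Real.exp m) + Real.log (1 + Real.exp (-m))

/-- Cross-entropy reconstruction loss between `x ∈ [-1,1]^V` and `x̃ ∈ (-1,1)^V`. -/
noncomputable def xent {V : ℕ} (x xt : Fin V → ℝ) : ℝ :=
  ∑ v, ((1 + x v) / 2 * Real.log (2 / (1 + xt v)) + (1 - x v) / 2 * Real.log (2 / (1 - xt v)))

/-- The bitwise slack function `γ^E(w, b) = -bᵀw + (1/n)·Σᵢ Ψ(wᵀe⁽ⁱ⁾)`. -/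
noncomputable def slack {n H : ℕ} (E : Fin H → Fin n → ℝ) (w b : Fin H → ℝ) : ℝ :=
  -(∑ h, b h * w h) + (1 / (n : ℝ)) * ∑ i, Psi (∑ h, w h * E h i)

/-!
Since `Ψ'` is the bipolar sigmoid `m ↦ (1 - e⁻ᵐ)/(1 + e⁻ᵐ)`, the first-order condition
`∇_w γ^E(w*, b) = 0` says exactly that the reconstructions `x̃ = Ψ'(w*ᵀe)` satisfy the moment
constraints `(1/n)·E·x̃ = b`. Against `x̃` the loss is affine in the data,
`ℓ(x, x̃) = ½ Σ (Ψ(m) - x·m)`, so every feasible `X` incurs the same loss `½ Σ_v γ^E(w_v*, b_v)`.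
By Gibbs' inequality `ℓ(x̃, x̃) ≤ ℓ(x̃, y)`, no reconstruction `y` does better against the feasible
data `x̃`: the pair `(x̃, x̃)` is a saddle point of the game.
-/

open Finset Real

section SaddlePoint

variable {ι κ α : Type*} [ConditionallyCompleteLattice α]

lemma ciSup_eq_of_forall_le_of_eq {g : κ → α} {c : α} {k₀ : κ} (hk : ∀ k, g k ≤ c)
    (hc : g k₀ = c) : ⨆ k, g k = c :=
  have : Nonempty κ := ⟨k₀⟩
  le_antisymm (ciSup_le hk) (hc ▸ le_ciSup ⟨c, Set.forall_mem_range.2 hk⟩ k₀)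

lemma iInf_iSup_eq_of_isSaddlePoint {f : ι → κ → α} {i₀ : ι} {k₀ : κ}
    (hbdd : ∀ i, BddAbove (Set.range (f i))) (hk : ∀ k, f i₀ k ≤ f i₀ k₀)
    (hi : ∀ i, f i₀ k₀ ≤ f i k₀) :
    ⨅ i, ⨆ k, f i k = f i₀ k₀ := by
  have : Nonempty ι := ⟨i₀⟩
  have hle : ∀ i, f i₀ k₀ ≤ ⨆ k, f i k := fun i => (hi i).trans (le_ciSup (hbdd i) k₀)
  refine le_antisymm ?_ (le_ciInf hle)
  exact (ciInf_le ⟨_, Set.forall_mem_range.2 hle⟩ i₀).trans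
    (ciSup_eq_of_forall_le_of_eq hk rfl).le

end SaddlePoint

noncomputable def bipolarSigmoid (m : ℝ) : ℝ := (1 - exp (-m)) / (1 + exp (-m))

noncomputable def bitLoss (x y : ℝ) : ℝ :=
  (1 + x) / 2 * log (2 / (1 + y)) + (1 - x) / 2 * log (2 / (1 - y))

lemma xent_eq_sum_bitLoss {V : ℕ} (x y : Fin V → ℝ) : xent x y = ∑ v, bitLoss (x v) (y v) := rfl

lemma bipolarSigmoid_mem_Ioo (m : ℝ) : bipolarSigmoid m ∈ Set.Ioo (-1 : ℝ) 1 := by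
  have h := exp_pos (-m)
  constructor
  · rw [bipolarSigmoid, lt_div_iff₀ (by linarith)]; linarith
  · rw [bipolarSigmoid, div_lt_one (by linarith)]; linarith

lemma one_add_exp_div_one_add_exp_neg (m : ℝ) : (1 + exp m) / (1 + exp (-m)) = exp m := by
  rw [exp_neg]
  have := exp_pos m
  field_simp
  ring

lemma hasDerivAt_Psi (m : ℝ) : HasDerivAt Psi (bipolarSigmoid m) m := by
  have hpos : HasDerivAt (fun x => log (1 + exp x)) (exp m / (1 + exp m)) m :=
    ((hasDerivAt_exp m).const_add 1).log (by positivity)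
  have hneg : HasDerivAt (fun x => log (1 + exp (-x))) (-exp (-m) / (1 + exp (-m))) m := by
    have := ((hasDerivAt_exp (-m)).comp m (hasDerivAt_neg m)).const_add 1
    exact (this.log (by simp only [Function.comp_apply]; positivity)).congr_deriv
      (by simp [neg_div])
  refine (hpos.add hneg).congr_deriv ?_
  rw [bipolarSigmoid, exp_neg]
  have := exp_pos m
  field_simp
  ring

lemma bitLoss_bipolarSigmoid (x m : ℝ) : bitLoss x (bipolarSigmoid m) = Psi m / 2 - x * m / 2 := by
  have hm := exp_pos m
  have hlog : log (1 + exp m) - log (1 + exp (-m)) = m := by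
    rw [← log_div (by positivity) (by positivity), one_add_exp_div_one_add_exp_neg, log_exp]
  have h₁ : 2 / (1 + bipolarSigmoid m) = 1 + exp (-m) := by
    rw [bipolarSigmoid, exp_neg]; field_simp; ring
  have h₂ : 2 / (1 - bipolarSigmoid m) = 1 + exp m := by
    rw [bipolarSigmoid, exp_neg]; field_simp; ring
  rw [bitLoss, h₁, h₂, Psi]
  linear_combination (-(x / 2)) * hlog

lemma bitLoss_self_le {x y : ℝ} (hx : x ∈ Set.Ioo (-1 : ℝ) 1) (hy : y ∈ Set.Ioo (-1 : ℝ) 1) :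
    bitLoss x x ≤ bitLoss x y := by
  obtain ⟨hx₁, hx₂⟩ := hx
  obtain ⟨hy₁, hy₂⟩ := hy
  have hp : (0 : ℝ) < 1 + x := by linarith
  have hm : (0 : ℝ) < 1 - x := by linarith
  have hpy : (0 : ℝ) < 1 + y := by linarith
  have hmy : (0 : ℝ) < 1 - y := by linarith
  -- Gibbs' inequality via `log t ≤ t - 1` at the two likelihood ratios
  have hp' : (1 + x) * log ((1 + y) / (1 + x)) ≤ y - x := by
    calc (1 + x) * log ((1 + y) / (1 + x)) ≤ (1 + x) * ((1 + y) / (1 + x) - 1) :=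
          mul_le_mul_of_nonneg_left (log_le_sub_one_of_pos (by positivity)) hp.le
      _ = y - x := by field_simp; ring
  have hm' : (1 - x) * log ((1 - y) / (1 - x)) ≤ x - y := by
    calc (1 - x) * log ((1 - y) / (1 - x)) ≤ (1 - x) * ((1 - y) / (1 - x) - 1) :=
          mul_le_mul_of_nonneg_left (log_le_sub_one_of_pos (by positivity)) hm.le
      _ = x - y := by field_simp; ring
  rw [log_div hpy.ne' hp.ne'] at hp'
  rw [log_div hmy.ne' hm.ne'] at hm'
  simp only [bitLoss]
  rw [log_div two_ne_zero hp.ne', log_div two_ne_zero hm.ne', log_div two_ne_zero hpy.ne',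
    log_div two_ne_zero hmy.ne']
  linarith

lemma bitLoss_le_abs_log_add_abs_log {x : ℝ} (hx : x ∈ Set.Icc (-1 : ℝ) 1) (y : ℝ) :
    bitLoss x y ≤ |log (2 / (1 + y))| + |log (2 / (1 - y))| := by
  obtain ⟨hx₁, hx₂⟩ := hx
  have weighted_le_abs {c : ℝ} (hc₀ : 0 ≤ c) (hc₁ : c ≤ 1) (a : ℝ) : c * a ≤ |a| := by
    nlinarith [le_abs_self a, abs_nonneg a]
  exact add_le_add (weighted_le_abs (by linarith) (by linarith) _)
    (weighted_le_abs (by linarith) (by linarith) _)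

section Slack

variable {n H : ℕ} (E : Fin H → Fin n → ℝ)

lemma hasDerivAt_slack_add_smul (w b d : Fin H → ℝ) :
    HasDerivAt (fun t : ℝ => slack E (w + t • d) b)
      (-(∑ h, b h * d h) +
        1 / n * ∑ i, bipolarSigmoid (∑ h, w h * E h i) * ∑ h, d h * E h i) 0 := by
  have hline : (fun t : ℝ => slack E (w + t • d) b) = fun t =>
      -(∑ h, b h * w h + t * ∑ h, b h * d h) +
        1 / n * ∑ i, Psi (∑ h, w h * E h i + t * ∑ h, d h * E h i) := by
    funext t
    simp only [slack, Pi.add_apply, Pi.smul_apply, smul_eq_mul, mul_add, add_mul, sum_add_distrib,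
      mul_sum, mul_assoc, mul_left_comm t]
  have hPsi (m δ : ℝ) : HasDerivAt (fun t => Psi (m + t * δ)) (bipolarSigmoid m * δ) 0 := by
    have := (hasDerivAt_Psi (m + 0 * δ)).comp (0 : ℝ) ((hasDerivAt_mul_const δ).const_add m)
    rwa [zero_mul, add_zero] at this
  rw [hline]
  have hlin := ((hasDerivAt_mul_const (x := 0) (∑ h, b h * d h)).const_add (∑ h, b h * w h)).neg
  refine (hlin.add ((HasDerivAt.fun_sum fun i _ => hPsi _ _).const_mul _)).congr_deriv ?_
  simp

noncomputable def bitReconstruction (w : Fin H → ℝ) (i : Fin n) : ℝ :=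
  bipolarSigmoid (∑ h, w h * E h i)

variable {E}

lemma mean_mul_bitReconstruction_eq_of_isMin {w b : Fin H → ℝ}
    (hw : ∀ w', slack E w b ≤ slack E w' b) (h : Fin H) :
    1 / n * ∑ i, E h i * bitReconstruction E w i = b h := by
  have hmin : IsLocalMin (fun t : ℝ => slack E (w + t • Pi.single h 1) b) 0 :=
    Filter.Eventually.of_forall fun t => by simpa using hw _
  have hcrit := hmin.hasDerivAt_eq_zero (hasDerivAt_slack_add_smul E w b (Pi.single h 1))
  simp only [Pi.single_apply, mul_ite, ite_mul, mul_one, one_mul, mul_zero, zero_mul,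
    sum_ite_eq', mem_univ, if_true] at hcrit
  simp only [bitReconstruction, mul_comm (E h _)]
  linarith

lemma mean_bitLoss_bitReconstruction (w b : Fin H → ℝ) {x : Fin n → ℝ}
    (hx : ∀ h, 1 / n * ∑ i, E h i * x i = b h) :
    1 / n * ∑ i, bitLoss (x i) (bitReconstruction E w i) = slack E w b / 2 := by
  have hmoment : 1 / n * ∑ i, x i * ∑ h, w h * E h i = ∑ h, b h * w h := by
    calc 1 / n * ∑ i, x i * ∑ h, w h * E h i = ∑ h, w h * (1 / n * ∑ i, E h i * x i) := by
          simp only [mul_sum]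
          rw [sum_comm]
          congr 1 with h
          congr 1 with i
          ring
      _ = ∑ h, b h * w h := by simp only [hx, mul_comm]
  simp only [bitReconstruction, bitLoss_bipolarSigmoid, slack, ← sub_div, ← sum_div,
    sum_sub_distrib]
  linear_combination -hmoment / 2

end Slack

section Mean

variable {n V : ℕ}

lemma mean_xent_le {X : Fin V → Fin n → ℝ} (hX : ∀ v i, X v i ∈ Set.Icc (-1 : ℝ) 1)
    (Xt : Fin V → Fin n → ℝ) :
    1 / (n : ℝ) * ∑ i, xent (fun v => X v i) (fun v => Xt v i) ≤
      1 / (n : ℝ) * ∑ i, ∑ v, (|log (2 / (1 + Xt v i))| + |log (2 / (1 - Xt v i))|) :=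
  mul_le_mul_of_nonneg_left
    (sum_le_sum fun i _ => sum_le_sum fun v _ => bitLoss_le_abs_log_add_abs_log (hX v i) _)
    (by positivity)

lemma mean_xent_self_le {X Xt : Fin V → Fin n → ℝ} (hX : ∀ v i, X v i ∈ Set.Ioo (-1 : ℝ) 1)
    (hXt : ∀ v i, Xt v i ∈ Set.Ioo (-1 : ℝ) 1) :
    1 / (n : ℝ) * ∑ i, xent (fun v => X v i) (fun v => X v i) ≤
      1 / (n : ℝ) * ∑ i, xent (fun v => X v i) (fun v => Xt v i) :=
  mul_le_mul_of_nonneg_left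
    (sum_le_sum fun i _ => sum_le_sum fun v _ => bitLoss_self_le (hX v i) (hXt v i))
    (by positivity)

lemma mean_xent_bitReconstruction {H : ℕ} (E : Fin H → Fin n → ℝ) (w B : Fin V → Fin H → ℝ)
    {X : Fin V → Fin n → ℝ} (hX : ∀ v h, 1 / (n : ℝ) * ∑ i, E h i * X v i = B v h) :
    1 / (n : ℝ) * ∑ i, xent (fun v => X v i) (fun v => bitReconstruction E (w v) i) =
      1 / 2 * ∑ v, slack E (w v) (B v) := by
  simp only [xent_eq_sum_bitLoss, mul_sum]
  rw [sum_comm]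
  simp only [← mul_sum, mean_bitLoss_bitReconstruction _ _ (hX _)]
  rw [← sum_div]
  ring

end Mean

theorem optimal_reconstructions_attain_minimax_general
    (n V H : ℕ)
    (E : Fin H → Fin n → ℝ)
    (B : Fin V → Fin H → ℝ)
    (wstar : Fin V → Fin H → ℝ)
    (hws : ∀ v, ∀ w : Fin H → ℝ, slack E (wstar v) (B v) ≤ slack E w (B v))
    (xt : Fin V → Fin n → ℝ)
    (hxt : ∀ v i, xt v i =
      (1 - Real.exp (-(∑ h, wstar v h * E h i))) / (1 + Real.exp (-(∑ h, wstar v h * E h i)))) :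
    (⨆ X : {X : Fin V → Fin n → ℝ //
        (∀ v i, X v i ∈ Set.Icc (-1 : ℝ) 1) ∧
        ∀ v h, (1 / (n : ℝ)) * ∑ i, E h i * X v i = B v h},
      (1 / (n : ℝ)) * ∑ i, xent (fun v => X.1 v i) (fun v => xt v i))
      = (1 / 2) * ∑ v, slack E (wstar v) (B v)
    ∧
    (⨆ X : {X : Fin V → Fin n → ℝ //
        (∀ v i, X v i ∈ Set.Icc (-1 : ℝ) 1) ∧
        ∀ v h, (1 / (n : ℝ)) * ∑ i, E h i * X v i = B v h},
      (1 / (n : ℝ)) * ∑ i, xent (fun v => X.1 v i) (fun v => xt v i))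
      = (⨅ Xt : {Xt : Fin V → Fin n → ℝ // ∀ v i, Xt v i ∈ Set.Ioo (-1 : ℝ) 1},
          ⨆ X : {X : Fin V → Fin n → ℝ //
              (∀ v i, X v i ∈ Set.Icc (-1 : ℝ) 1) ∧
              ∀ v h, (1 / (n : ℝ)) * ∑ i, E h i * X v i = B v h},
            (1 / (n : ℝ)) * ∑ i, xent (fun v => X.1 v i) (fun v => Xt.1 v i)) := by
  obtain rfl : xt = fun v => bitReconstruction E (wstar v) := funext fun v => funext (hxt v)
  have hIoo : ∀ v i, bitReconstruction E (wstar v) i ∈ Set.Ioo (-1 : ℝ) 1 :=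
    fun v i => bipolarSigmoid_mem_Ioo _
  have hIcc v i := Set.Ioo_subset_Icc_self (hIoo v i)
  have hmoment v := mean_mul_bitReconstruction_eq_of_isMin (hws v)
  have hloss := mean_xent_bitReconstruction E wstar B hmoment
  refine ⟨?sup, Eq.trans ?sup ?minimax⟩
  case sup =>
    exact ciSup_eq_of_forall_le_of_eq (k₀ := ⟨_, hIcc, hmoment⟩)
      (fun X => (mean_xent_bitReconstruction E wstar B X.2.2).le) hloss
  case minimax =>
    refine ((iInf_iSup_eq_of_isSaddlePoint (i₀ := ⟨_, hIoo⟩) (k₀ := ⟨_, hIcc, hmoment⟩)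
      ?_ ?_ ?_).trans hloss).symm
    · exact fun Xt => ⟨_, Set.forall_mem_range.2 fun X => mean_xent_le X.2.1 Xt.1⟩
    · exact fun X => (mean_xent_bitReconstruction E wstar B X.2.2).trans_le hloss.ge
    · exact fun Xt => mean_xent_self_le hIoo Xt.2

/-- If `w_v*` attains the infimum of the bitwise slack function for each `v`, then the
logistic-neuron reconstructions `x̃_v⁽ⁱ⁾ = (1 - e^{-w_v*ᵀe⁽ⁱ⁾})/(1 + e^{-w_v*ᵀe⁽ⁱ⁾})`
have worst-case loss `(1/2)·Σ_v γ^E(w_v*, b_v)`, which is the minimax value of the game. -/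
theorem optimal_reconstructions_attain_minimax
    (n V H : ℕ) (hn : 0 < n) (hV : 0 < V) (hH : 0 < H)
    (E : Fin H → Fin n → ℝ) (hE : ∀ h i, E h i ∈ Set.Icc (-1 : ℝ) 1)
    (B : Fin V → Fin H → ℝ)
    (hfeas : ∃ X : Fin V → Fin n → ℝ,
      (∀ v i, X v i ∈ Set.Icc (-1 : ℝ) 1) ∧
      ∀ v h, (1 / (n : ℝ)) * ∑ i, E h i * X v i = B v h)
    (wstar : Fin V → Fin H → ℝ)
    (hws : ∀ v, ∀ w : Fin H → ℝ, slack E (wstar v) (B v) ≤ slack E w (B v))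
    (xt : Fin V → Fin n → ℝ)
    (hxt : ∀ v i, xt v i =
      (1 - Real.exp (-(∑ h, wstar v h * E h i))) / (1 + Real.exp (-(∑ h, wstar v h * E h i)))) :
    (⨆ X : {X : Fin V → Fin n → ℝ //
        (∀ v i, X v i ∈ Set.Icc (-1 : ℝ) 1) ∧
        ∀ v h, (1 / (n : ℝ)) * ∑ i, E h i * X v i = B v h},
      (1 / (n : ℝ)) * ∑ i, xent (fun v => X.1 v i) (fun v => xt v i))
      = (1 / 2) * ∑ v, slack E (wstar v) (B v)
    ∧
    (⨆ X : {X : Fin V → Fin n → ℝ //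
        (∀ v i, X v i ∈ Set.Icc (-1 : ℝ) 1) ∧
        ∀ v h, (1 / (n : ℝ)) * ∑ i, E h i * X v i = B v h},
      (1 / (n : ℝ)) * ∑ i, xent (fun v => X.1 v i) (fun v => xt v i))
      = (⨅ Xt : {Xt : Fin V → Fin n → ℝ // ∀ v i, Xt v i ∈ Set.Ioo (-1 : ℝ) 1},
          ⨆ X : {X : Fin V → Fin n → ℝ //
              (∀ v i, X v i ∈ Set.Icc (-1 : ℝ) 1) ∧
              ∀ v h, (1 / (n : ℝ)) * ∑ i, E h i * X v i = B v h},
            (1 / (n : ℝ)) * ∑ i, xent (fun v => X.1 v i) (fun v => Xt.1 v i)) :=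
  optimal_reconstructions_attain_minimax_general n V H E B wstar hws xt hxt
end

section
/- Let n, V, H be positive integers, E ∈ [−1,1]^{H×n} with columns e⁽ⁱ⁾, B ∈ ℝ^{V×H} with rows b_v, and ε_1,…,ε_V ≥ 0. Assume there exists X ∈ [−1,1]^{V×n} with ‖(1/n)·E·x_v − b_v‖_∞ ≤ ε_v for all v. Then the infimum over reconstructions X̃ ∈ (−1,1)^{V×n} of the supremum over X ∈ [−1,1]^{V×n} satisfying ‖(1/n)·E·x_v − b_v‖_∞ ≤ ε_v for all v ∈ {1,…,V} of the average cross-entropy loss (1/n)·Σ_{i=1}^n ℓ(x⁽ⁱ⁾, x̃⁽ⁱ⁾) equals (1/2)·Σ_{v=1}^V inf_{w ∈ ℝ^H} [ −b_vᵀw + (1/n)·Σ_{i=1}^n Ψ(wᵀe⁽ⁱ⁾) + ε_v·‖w‖₁ ]. -/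
/-!
The problem decouples over the rows `x = X v`, each constrained by `|corr E x h - c h| ≤ ε`.
For one row, Gibbs' inequality bounds the loss of any reconstruction below by the entropy of
`x`, so the minimax value is at least the maximal entropy over the feasible rows. Conversely,
the reconstruction `x̃ᵢ = tanh (mᵢ / 2)`, `mᵢ = wᵀe⁽ⁱ⁾`, has loss `(1/2n) Σᵢ (Ψ(mᵢ) - mᵢ xᵢ)`,
which Hölder's inequality and the constraints bound by half the dual objective at `w`.
Strong duality closes the gap: the dual objective gets arbitrarily close to twice the maximal
entropy because the Fenchel–Young inequality between `Ψ` and twice the entropy of a bit is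
an equality at `x = tanh (m / 2)` and approximate Lagrange multipliers exist. The latter come
from separating the hypograph of the value function from a point just above it; that point
lies outside the hypograph once the constraints are relaxed slightly, by compactness.
-/

lemma mul_log_le_mul_log_add_sub {p q : ℝ} (hp : 0 ≤ p) (hq : 0 < q) :
    p * Real.log q ≤ p * Real.log p + q - p := by
  rcases hp.eq_or_lt with rfl | hp
  · simpa using hq.le
  · have h := mul_le_mul_of_nonneg_left (Real.log_le_sub_one_of_pos (div_pos hq hp)) hp.le
    rw [Real.log_div hq.ne' hp.ne', mul_sub, mul_sub, mul_one, mul_div_cancel₀ _ hp.ne'] at h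
    linarith

lemma ciInf_ciSup_eq_of_forall_le {α β : Type*} [Nonempty α] {F : α → β → ℝ} {c : ℝ}
    (hbdd : ∀ a, BddAbove (Set.range (F a))) (hlow : ∃ b, ∀ a, c ≤ F a b)
    (hup : ∀ e > 0, ∃ a, ∀ b, F a b ≤ c + e) : ⨅ a, ⨆ b, F a b = c := by
  obtain ⟨b₀, hb₀⟩ := hlow
  have : Nonempty β := ⟨b₀⟩
  have hc : ∀ a, c ≤ ⨆ b, F a b := fun a => (hb₀ a).trans (le_ciSup (hbdd a) b₀)
  refine le_antisymm (le_of_forall_pos_le_add fun e he => ?_) (le_ciInf hc)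
  obtain ⟨a, ha⟩ := hup e he
  exact (ciInf_le ⟨c, by rintro _ ⟨a, rfl⟩; exact hc a⟩ a).trans (ciSup_le ha)

lemma nonpos_of_forall_add_mul_le {A B b : ℝ} (h : ∀ s : ℝ, 0 ≤ s → A + s * b ≤ B) : b ≤ 0 := by
  by_contra! hb
  have hAB : A ≤ B := by simpa using h 0 le_rfl
  have := h ((B - A + 1) / b) (by positivity)
  rw [div_mul_cancel₀ _ hb.ne'] at this
  linarith

lemma ContinuousLinearMap.apply_prod_eq_sum {ι : Type*} [Fintype ι] [DecidableEq ι]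
    (φ : ((ι → ℝ) × ℝ) →L[ℝ] ℝ) (u : ι → ℝ) (t : ℝ) :
    φ (u, t) = ∑ j, u j * φ (Pi.single j 1, 0) + t * φ (0, 1) := by
  have e : (u, t) = ∑ j, u j • ((Pi.single j 1, 0) : (ι → ℝ) × ℝ) +
      t • ((0, 1) : (ι → ℝ) × ℝ) := by
    ext j <;> simp [Prod.fst_sum, Prod.snd_sum, Finset.sum_apply, Pi.single_apply]
  conv_lhs => rw [e]
  simp only [map_add, map_sum, map_smul, smul_eq_mul]

lemma exists_forall_le_of_notMem_interior {F : Type*} [AddCommGroup F] [Module ℝ F]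
    [TopologicalSpace F] [IsTopologicalAddGroup F] [ContinuousSMul ℝ F]
    [LocallyConvexSpace ℝ F] {C : Set F} (hC : Convex ℝ C) {p q : F} (hp : p ∉ interior C)
    (hq : q ∈ interior C) : ∃ φ : StrongDual ℝ F, φ q < φ p ∧ ∀ z ∈ C, φ z ≤ φ p := by
  obtain ⟨φ, hφ⟩ := geometric_hahn_banach_open_point hC.interior isOpen_interior hp
  have : closure C ⊆ {z | φ z ≤ φ p} := by
    rw [← hC.closure_interior_eq_closure_of_nonempty_interior ⟨q, hq⟩]
    exact closure_minimal (fun z hz => (hφ z hz).le) (isClosed_le φ.continuous continuous_const)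
  exact ⟨φ, hφ q hq, fun z hz => this (subset_closure hz)⟩

section LagrangeMultipliers

open Set

variable {E ι : Type*} {X : Set E} {f : E → ℝ} {g : ι → E → ℝ} {M : ℝ}

lemma exists_pos_lt_of_relaxed [TopologicalSpace E] (hX : IsCompact X) (hf : Continuous f)
    (hg : ∀ j, Continuous (g j)) (hM : ∀ x ∈ X, (∀ j, g j x ≤ 0) → f x ≤ M) {δ : ℝ}
    (hδ : 0 < δ) : ∃ ρ > 0, ∀ x ∈ X, (∀ j, g j x ≤ ρ) → f x < M + δ := by
  by_contra! H
  let t : ℕ → Set E := fun k => {x | M + δ ≤ f x} ∩ ⋂ j, {x | g j x ≤ 1 / ((k : ℝ) + 1)}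
  have ht : ∀ k, IsClosed (t k) := fun k =>
    (isClosed_le continuous_const hf).inter
      (isClosed_iInter fun j => isClosed_le (hg j) continuous_const)
  obtain ⟨x, hxX, hxt⟩ := hX.inter_iInter_nonempty t ht fun u => by
    obtain ⟨x, hxX, hgx, hfx⟩ := H (1 / ((u.sup id : ℕ) + 1)) (by positivity)
    refine ⟨x, hxX, mem_iInter₂.2 fun k hk => ⟨hfx, mem_iInter.2 fun j => (hgx j).trans ?_⟩⟩
    gcongr
    exact_mod_cast Finset.le_sup (f := id) hk
  have hfeas : ∀ j, g j x ≤ 0 := fun j => by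
    by_contra! hpos
    obtain ⟨k, hk⟩ := exists_nat_one_div_lt hpos
    exact not_lt.2 (mem_iInter.1 (mem_iInter.1 hxt k).2 j) hk
  have hfx : M + δ ≤ f x := (mem_iInter.1 hxt 0).1
  linarith [hM x hxX hfeas]

/-- The hypograph of the value function `u ↦ sup {f x | x ∈ X, g x ≤ u}`. -/
def perturbationHypograph (X : Set E) (f : E → ℝ) (g : ι → E → ℝ) : Set ((ι → ℝ) × ℝ) :=
  {z | ∃ x ∈ X, (∀ j, g j x ≤ z.1 j) ∧ z.2 ≤ f x}

lemma convex_perturbationHypograph [AddCommGroup E] [Module ℝ E] (hf : ConcaveOn ℝ X f)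
    (hg : ∀ j, ConvexOn ℝ X (g j)) :
    Convex ℝ (perturbationHypograph X f g) := by
  rintro z ⟨x, hx, hgx, hfx⟩ z' ⟨x', hx', hgx', hfx'⟩ a b ha hb hab
  refine ⟨a • x + b • x', hf.1 hx hx' ha hb hab, fun j => ?_, ?_⟩
  · calc g j (a • x + b • x') ≤ a • g j x + b • g j x' := (hg j).2 hx hx' ha hb hab
      _ ≤ (a • z + b • z').1 j := by
        simp only [smul_eq_mul, Prod.fst_add, Prod.smul_fst, Pi.add_apply, Pi.smul_apply]
        gcongr <;> simp [hgx, hgx']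
  · calc (a • z + b • z').2 = a * z.2 + b * z'.2 := rfl
      _ ≤ a • f x + b • f x' := by simp only [smul_eq_mul]; gcongr
      _ ≤ f (a • x + b • x') := hf.2 hx hx' ha hb hab

lemma mem_interior_perturbationHypograph [Fintype ι] {x₀ : E} (hx₀ : x₀ ∈ X) {u : ι → ℝ}
    {t : ℝ} (hu : ∀ j, g j x₀ < u j) (ht : t < f x₀) :
    (u, t) ∈ interior (perturbationHypograph X f g) := by
  let U : Set ((ι → ℝ) × ℝ) := (⋂ j, {z | g j x₀ < z.1 j}) ∩ {z | z.2 < f x₀}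
  have hU : IsOpen U := (isOpen_iInter_of_finite fun j => isOpen_lt continuous_const
    (by fun_prop)).inter (isOpen_lt continuous_snd continuous_const)
  have hUC : U ⊆ perturbationHypograph X f g := fun z hz =>
    ⟨x₀, hx₀, fun j => (mem_iInter.1 hz.1 j).le, le_of_lt hz.2⟩
  exact interior_maximal hUC hU (mem_inter (mem_iInter.2 hu) ht)

lemma apply_single_nonpos_of_forall_le [AddCommGroup E] [Module ℝ E] [DecidableEq ι]
    {φ : ((ι → ℝ) × ℝ) →L[ℝ] ℝ} {c : ℝ} (hφ : ∀ z ∈ perturbationHypograph X f g, φ z ≤ c)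
    {x₀ : E} (hx₀ : x₀ ∈ X) (j : ι) : φ (Pi.single j 1, 0) ≤ 0 := by
  refine nonpos_of_forall_add_mul_le (A := φ (fun k => g k x₀, f x₀)) (B := c) fun s hs => ?_
  have hmem : ((fun k => g k x₀, f x₀) + s • ((Pi.single j 1, 0) : (ι → ℝ) × ℝ)) ∈
      perturbationHypograph X f g := by
    refine ⟨x₀, hx₀, fun k => ?_, by simp⟩
    have : 0 ≤ s * (Pi.single j (1 : ℝ) : ι → ℝ) k :=
      mul_nonneg hs ((Pi.single_nonneg.2 zero_le_one : (0 : ι → ℝ) ≤ Pi.single j 1) k)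
    simpa using this
  have h := hφ _ hmem
  rwa [map_add, map_smul, smul_eq_mul] at h

theorem exists_approx_lagrange_multipliers [AddCommGroup E] [Module ℝ E] [TopologicalSpace E]
    [Fintype ι] (hX : IsCompact X) (hf : ConcaveOn ℝ X f)
    (hfc : Continuous f) (hg : ∀ j, ConvexOn ℝ X (g j)) (hgc : ∀ j, Continuous (g j))
    {x₀ : E} (hx₀ : x₀ ∈ X) (hx₀g : ∀ j, g j x₀ ≤ 0)
    (hM : ∀ x ∈ X, (∀ j, g j x ≤ 0) → f x ≤ M) {δ : ℝ} (hδ : 0 < δ) :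
    ∃ l : ι → ℝ, (∀ j, 0 ≤ l j) ∧ ∀ x ∈ X, f x ≤ M + δ + ∑ j, l j * g j x := by
  classical
  obtain ⟨ρ, hρ, hrelax⟩ := exists_pos_lt_of_relaxed hX hfc hgc hM hδ
  set C := perturbationHypograph X f g
  set p : (ι → ℝ) × ℝ := (fun _ => ρ, M + δ)
  have hp : p ∉ interior C := fun hp => by
    obtain ⟨x, hx, hgx, hfx⟩ := interior_subset hp
    exact (hrelax x hx hgx).not_ge hfx
  -- `q` lies straight below `p`, which forces the separating functional to be non-vertical.
  set q : (ι → ℝ) × ℝ := (fun _ => ρ, f x₀ - 1)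
  have hq : q ∈ interior C := mem_interior_perturbationHypograph hx₀
    (fun j => (hx₀g j).trans_lt hρ) (sub_one_lt _)
  obtain ⟨φ, hφq, hφC⟩ :=
    exists_forall_le_of_notMem_interior (convex_perturbationHypograph hf hg) hp hq
  set a : ι → ℝ := fun j => φ (Pi.single j 1, 0)
  set μ := φ (0, 1)
  have hφ_eq : ∀ u t, φ (u, t) = ∑ j, u j * a j + t * μ := φ.apply_prod_eq_sum
  have ha : ∀ j, a j ≤ 0 := apply_single_nonpos_of_forall_le hφC hx₀
  have hμ : 0 < μ := by
    rw [hφ_eq, hφ_eq] at hφq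
    nlinarith [hM x₀ hx₀ hx₀g]
  refine ⟨fun j => -a j / μ, fun j => div_nonneg (neg_nonneg.2 (ha j)) hμ.le, fun x hx => ?_⟩
  have h := hφC (fun j => g j x, f x) ⟨x, hx, fun j => le_rfl, le_rfl⟩
  rw [hφ_eq, hφ_eq] at h
  have hρa : ∑ j, ρ * a j ≤ 0 :=
    Finset.sum_nonpos fun j _ => mul_nonpos_of_nonneg_of_nonpos hρ.le (ha j)
  have e : (∑ j, -a j / μ * g j x) * μ = -∑ j, g j x * a j := by
    rw [Finset.sum_mul, ← Finset.sum_neg_distrib]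
    exact Finset.sum_congr rfl fun j _ => by field_simp
  rw [← mul_le_mul_iff_of_pos_right hμ]
  nlinarith

end LagrangeMultipliers

namespace CrossEntropyMinimax

open Real Set

noncomputable def bitEntropy (x : ℝ) : ℝ := binEntropy ((1 + x) / 2)

noncomputable def bitXent (x xt : ℝ) : ℝ :=
  (1 + x) / 2 * log (2 / (1 + xt)) + (1 - x) / 2 * log (2 / (1 - xt))

/-- `tanh (m / 2)` -/
noncomputable def tanhHalf (m : ℝ) : ℝ := (exp m - 1) / (exp m + 1)

@[fun_prop]
lemma continuous_bitEntropy : Continuous bitEntropy := by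
  unfold bitEntropy; fun_prop

lemma concaveOn_bitEntropy : ConcaveOn ℝ (Icc (-1) 1) bitEntropy := by
  refine ⟨convex_Icc _ _, fun x hx y hy a b ha hb hab => ?_⟩
  have mem : ∀ z ∈ Icc (-1 : ℝ) 1, (1 + z) / 2 ∈ Icc (0 : ℝ) 1 := fun z hz =>
    ⟨by linarith [hz.1], by linarith [hz.2]⟩
  have h := strictConcave_binEntropy.concaveOn.2 (mem x hx) (mem y hy) ha hb hab
  have e : a • ((1 + x) / 2) + b • ((1 + y) / 2) = (1 + (a • x + b • y)) / 2 := by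
    simp only [smul_eq_mul]; linear_combination hab / 2
  rwa [e] at h

lemma bitEntropy_le_bitXent {x xt : ℝ} (hx : x ∈ Icc (-1) 1) (hxt : xt ∈ Ioo (-1) 1) :
    bitEntropy x ≤ bitXent x xt := by
  obtain ⟨hx₁, hx₂⟩ := hx
  obtain ⟨ht₁, ht₂⟩ := hxt
  have h₁ := mul_log_le_mul_log_add_sub (p := (1 + x) / 2) (q := (1 + xt) / 2)
    (by linarith) (by linarith)
  have h₂ := mul_log_le_mul_log_add_sub (p := (1 - x) / 2) (q := (1 - xt) / 2)
    (by linarith) (by linarith)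
  have e₁ : 1 - (1 + x) / 2 = (1 - x) / 2 := by ring
  have l₁ : log (2 / (1 + xt)) = -log ((1 + xt) / 2) := by rw [← log_inv, inv_div]
  have l₂ : log (2 / (1 - xt)) = -log ((1 - xt) / 2) := by rw [← log_inv, inv_div]
  rw [bitEntropy, binEntropy, e₁, bitXent, l₁, l₂, log_inv, log_inv]
  linarith

lemma bitXent_self (x : ℝ) : bitXent x x = bitEntropy x := by
  have e₁ : 1 - (1 + x) / 2 = (1 - x) / 2 := by ring
  rw [bitEntropy, binEntropy, e₁, bitXent, inv_div, inv_div]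

lemma tanhHalf_mem (m : ℝ) : tanhHalf m ∈ Ioo (-1) 1 := by
  have h : 0 < exp m + 1 := by positivity
  constructor
  · rw [tanhHalf, lt_div_iff₀ h]; linarith [exp_pos m]
  · rw [tanhHalf, div_lt_iff₀ h]; linarith

lemma Psi_eq_two_mul_log_sub (m : ℝ) : Psi m = 2 * log (exp m + 1) - m := by
  have e : 1 + exp (-m) = (exp m + 1) / exp m := by
    rw [exp_neg]; field_simp
  rw [Psi, e, log_div (by positivity) (exp_pos m).ne', log_exp, add_comm 1]
  ring

lemma bitXent_tanhHalf (x m : ℝ) : bitXent x (tanhHalf m) = (Psi m - m * x) / 2 := by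
  have h : exp m + 1 ≠ 0 := by positivity
  have e₁ : 2 / (1 + tanhHalf m) = (exp m + 1) / exp m := by
    rw [tanhHalf]; field_simp; ring
  have e₂ : 2 / (1 - tanhHalf m) = exp m + 1 := by
    rw [tanhHalf]; field_simp; ring
  rw [bitXent, e₁, e₂, log_div h (exp_pos m).ne', log_exp, Psi_eq_two_mul_log_sub]
  ring

lemma two_mul_bitEntropy_le {x : ℝ} (hx : x ∈ Icc (-1) 1) (m : ℝ) :
    2 * bitEntropy x ≤ Psi m - m * x := by
  linarith [bitEntropy_le_bitXent hx (tanhHalf_mem m), bitXent_tanhHalf x m]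

lemma two_mul_bitEntropy_tanhHalf (m : ℝ) :
    2 * bitEntropy (tanhHalf m) = Psi m - m * tanhHalf m := by
  linarith [bitXent_self (tanhHalf m), bitXent_tanhHalf (tanhHalf m) m]

lemma bitXent_le {x xt : ℝ} (hx : x ∈ Icc (-1) 1) (hxt : xt ∈ Ioo (-1) 1) :
    bitXent x xt ≤ log (2 / (1 + xt)) + log (2 / (1 - xt)) := by
  obtain ⟨hx₁, hx₂⟩ := hx
  obtain ⟨ht₁, ht₂⟩ := hxt
  have l₁ : 0 ≤ log (2 / (1 + xt)) := log_nonneg (by rw [le_div_iff₀ (by linarith)]; linarith)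
  have l₂ : 0 ≤ log (2 / (1 - xt)) := log_nonneg (by rw [le_div_iff₀ (by linarith)]; linarith)
  rw [bitXent]
  nlinarith

variable {n H : ℕ}

def cube (n : ℕ) : Set (Fin n → ℝ) := univ.pi fun _ => Icc (-1) 1

noncomputable def corr (E : Fin H → Fin n → ℝ) (x : Fin n → ℝ) (h : Fin H) : ℝ :=
  (1 / (n : ℝ)) * ∑ i, E h i * x i

def margin (E : Fin H → Fin n → ℝ) (w : Fin H → ℝ) (i : Fin n) : ℝ := ∑ h, w h * E h i

def feasibleRows (E : Fin H → Fin n → ℝ) (c : Fin H → ℝ) (ε : ℝ) : Set (Fin n → ℝ) :=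
  {x | x ∈ cube n ∧ ∀ h, |corr E x h - c h| ≤ ε}

noncomputable def rowEntropy (x : Fin n → ℝ) : ℝ := (1 / (n : ℝ)) * ∑ i, bitEntropy (x i)

noncomputable def lagrangian (E : Fin H → Fin n → ℝ) (x : Fin n → ℝ) (w : Fin H → ℝ) : ℝ :=
  (1 / (n : ℝ)) * ∑ i, (Psi (margin E w i) - margin E w i * x i)

noncomputable def dualObjective (E : Fin H → Fin n → ℝ) (c : Fin H → ℝ) (ε : ℝ)
    (w : Fin H → ℝ) : ℝ :=
  -(∑ h, c h * w h) + (1 / (n : ℝ)) * ∑ i, Psi (margin E w i) + ε * ∑ h, |w h|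

lemma sum_mul_corr (E : Fin H → Fin n → ℝ) (x : Fin n → ℝ) (w : Fin H → ℝ) :
    ∑ h, w h * corr E x h = (1 / (n : ℝ)) * ∑ i, margin E w i * x i := by
  simp only [corr, margin, Finset.mul_sum, Finset.sum_mul]
  rw [Finset.sum_comm]
  exact Finset.sum_congr rfl fun _ _ => Finset.sum_congr rfl fun _ _ => by ring

lemma dualObjective_eq (E : Fin H → Fin n → ℝ) (c : Fin H → ℝ) (ε : ℝ) (x : Fin n → ℝ)
    (w : Fin H → ℝ) : dualObjective E c ε w =
      lagrangian E x w + ∑ h, w h * (corr E x h - c h) + ε * ∑ h, |w h| := by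
  simp only [dualObjective, lagrangian, mul_sub, Finset.sum_sub_distrib, sum_mul_corr,
    mul_comm (w _) (c _)]
  ring

lemma lagrangian_le_dualObjective {E : Fin H → Fin n → ℝ} {c : Fin H → ℝ} {ε : ℝ}
    {x : Fin n → ℝ} (hx : ∀ h, |corr E x h - c h| ≤ ε) (w : Fin H → ℝ) :
    lagrangian E x w ≤ dualObjective E c ε w := by
  have : 0 ≤ ∑ h, w h * (corr E x h - c h) + ε * ∑ h, |w h| := by
    rw [Finset.mul_sum, ← Finset.sum_add_distrib]
    refine Finset.sum_nonneg fun h _ => ?_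
    linarith [neg_abs_le (w h * (corr E x h - c h)), abs_mul (w h) (corr E x h - c h),
      mul_le_mul_of_nonneg_left (hx h) (abs_nonneg (w h))]
  rw [dualObjective_eq E c ε x]
  linarith

lemma two_mul_rowEntropy_le_lagrangian (E : Fin H → Fin n → ℝ) {x : Fin n → ℝ}
    (hx : x ∈ cube n) (w : Fin H → ℝ) : 2 * rowEntropy x ≤ lagrangian E x w := by
  rw [rowEntropy, lagrangian, mul_left_comm, Finset.mul_sum]
  gcongr with i
  exact two_mul_bitEntropy_le (hx i trivial) _

lemma two_mul_rowEntropy_tanhHalf (E : Fin H → Fin n → ℝ) (w : Fin H → ℝ) :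
    2 * rowEntropy (fun i => tanhHalf (margin E w i)) =
      lagrangian E (fun i => tanhHalf (margin E w i)) w := by
  rw [rowEntropy, lagrangian, mul_left_comm, Finset.mul_sum]
  simp only [two_mul_bitEntropy_tanhHalf]

lemma two_mul_rowEntropy_le_dualObjective {E : Fin H → Fin n → ℝ} {c : Fin H → ℝ} {ε : ℝ}
    {x : Fin n → ℝ} (hx : x ∈ feasibleRows E c ε) (w : Fin H → ℝ) :
    2 * rowEntropy x ≤ dualObjective E c ε w :=
  (two_mul_rowEntropy_le_lagrangian E hx.1 w).trans (lagrangian_le_dualObjective hx.2 w)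

lemma isCompact_cube (n : ℕ) : IsCompact (cube n) := isCompact_univ_pi fun _ => isCompact_Icc

lemma continuous_corr (E : Fin H → Fin n → ℝ) (h : Fin H) : Continuous fun x => corr E x h := by
  unfold corr; fun_prop

lemma corr_add_smul (E : Fin H → Fin n → ℝ) (x y : Fin n → ℝ) (a b : ℝ) (h : Fin H) :
    corr E (a • x + b • y) h = a * corr E x h + b * corr E y h := by
  simp only [corr, Pi.add_apply, Pi.smul_apply, smul_eq_mul, mul_add, Finset.sum_add_distrib,
    Finset.mul_sum]
  congr 1 <;> exact Finset.sum_congr rfl fun _ _ => by ring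

lemma isCompact_feasibleRows (E : Fin H → Fin n → ℝ) (c : Fin H → ℝ) (ε : ℝ) :
    IsCompact (feasibleRows E c ε) := by
  have hclosed : IsClosed {x : Fin n → ℝ | ∀ h, |corr E x h - c h| ≤ ε} := by
    rw [ofPred_forall]
    exact isClosed_iInter fun h =>
      isClosed_le ((continuous_corr E h).sub continuous_const).abs continuous_const
  exact (isCompact_cube n).inter_right hclosed

lemma concaveOn_rowEntropy (n : ℕ) : ConcaveOn ℝ (cube n) rowEntropy := by
  refine ⟨convex_pi fun _ _ => convex_Icc _ _, fun x hx y hy a b ha hb hab => ?_⟩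
  calc a • rowEntropy x + b • rowEntropy y
      = (1 / (n : ℝ)) * ∑ i, (a * bitEntropy (x i) + b * bitEntropy (y i)) := by
        simp only [rowEntropy, smul_eq_mul, Finset.sum_add_distrib, ← Finset.mul_sum]; ring
    _ ≤ rowEntropy (a • x + b • y) := by
        unfold rowEntropy
        gcongr with i
        exact concaveOn_bitEntropy.2 (hx i trivial) (hy i trivial) ha hb hab

lemma continuous_rowEntropy (n : ℕ) : Continuous (rowEntropy (n := n)) := by
  unfold rowEntropy; fun_prop

noncomputable def constraint (E : Fin H → Fin n → ℝ) (c : Fin H → ℝ) (ε : ℝ) :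
    Fin H ⊕ Fin H → (Fin n → ℝ) → ℝ :=
  Sum.elim (fun h x => corr E x h - c h - ε) (fun h x => c h - corr E x h - ε)

lemma forall_constraint_nonpos_iff {E : Fin H → Fin n → ℝ} {c : Fin H → ℝ} {ε : ℝ}
    {x : Fin n → ℝ} : (∀ j, constraint E c ε j x ≤ 0) ↔ ∀ h, |corr E x h - c h| ≤ ε := by
  simp only [Sum.forall, constraint, Sum.elim_inl, Sum.elim_inr, abs_le, ← forall_and]
  exact forall_congr' fun h => by constructor <;> rintro ⟨h₁, h₂⟩ <;> constructor <;> linarith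

lemma convexOn_constraint (E : Fin H → Fin n → ℝ) (c : Fin H → ℝ) (ε : ℝ)
    (j : Fin H ⊕ Fin H) : ConvexOn ℝ (cube n) (constraint E c ε j) := by
  refine ⟨convex_pi fun _ _ => convex_Icc _ _, fun x _ y _ a b _ _ hab => le_of_eq ?_⟩
  rcases j with h | h <;>
    simp only [constraint, Sum.elim_inl, Sum.elim_inr, corr_add_smul, smul_eq_mul]
  · linear_combination (c h + ε) * hab
  · linear_combination (ε - c h) * hab

lemma continuous_constraint (E : Fin H → Fin n → ℝ) (c : Fin H → ℝ) (ε : ℝ)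
    (j : Fin H ⊕ Fin H) : Continuous (constraint E c ε j) := by
  cases j
  · exact ((continuous_corr E _).sub continuous_const).sub continuous_const
  · exact (continuous_const.sub (continuous_corr E _)).sub continuous_const

lemma exists_dualObjective_le {E : Fin H → Fin n → ℝ} {c : Fin H → ℝ} {ε M : ℝ}
    {x₀ : Fin n → ℝ} (hx₀ : x₀ ∈ feasibleRows E c ε)
    (hM : ∀ x ∈ feasibleRows E c ε, rowEntropy x ≤ M) {δ : ℝ} (hδ : 0 < δ) :
    ∃ w, dualObjective E c ε w ≤ 2 * M + δ := by
  obtain ⟨l, hl, hlag⟩ := exists_approx_lagrange_multipliers (isCompact_cube n)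
    (concaveOn_rowEntropy n) (continuous_rowEntropy n) (convexOn_constraint E c ε)
    (continuous_constraint E c ε) hx₀.1 (forall_constraint_nonpos_iff.2 hx₀.2)
    (fun x hx hg => hM x ⟨hx, forall_constraint_nonpos_iff.1 hg⟩) (half_pos hδ)
  -- The multipliers of the two one-sided constraints combine into one weight vector, and the
  -- dual objective at `w` is evaluated at the point where Fenchel–Young is an equality.
  set w : Fin H → ℝ := fun h => 2 * (l (.inr h) - l (.inl h))
  set x : Fin n → ℝ := fun i => tanhHalf (margin E w i)
  have hx : x ∈ cube n := fun i _ => Ioo_subset_Icc_self (tanhHalf_mem _)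
  have hpenalty : ∑ h, w h * (corr E x h - c h) + ε * ∑ h, |w h| ≤
      -(2 * ∑ j, l j * constraint E c ε j x) := by
    simp only [Fintype.sum_sum_type, constraint, Sum.elim_inl, Sum.elim_inr, Finset.mul_sum,
      mul_add, ← Finset.sum_add_distrib, ← Finset.sum_neg_distrib]
    refine Finset.sum_le_sum fun h _ => ?_
    have hε : 0 ≤ ε := (abs_nonneg _).trans (hx₀.2 h)
    have hw : |w h| ≤ 2 * (l (.inl h) + l (.inr h)) :=
      abs_le.2 ⟨by linarith [hl (.inl h), hl (.inr h)], by linarith [hl (.inl h), hl (.inr h)]⟩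
    nlinarith [mul_le_mul_of_nonneg_left hw hε]
  refine ⟨w, ?_⟩
  rw [dualObjective_eq E c ε x, ← two_mul_rowEntropy_tanhHalf]
  linarith [hlag x hx]

theorem iInf_dualObjective_eq {E : Fin H → Fin n → ℝ} {c : Fin H → ℝ} {ε : ℝ}
    {xs : Fin n → ℝ} (hxs : xs ∈ feasibleRows E c ε)
    (hmax : IsMaxOn rowEntropy (feasibleRows E c ε) xs) :
    ⨅ w, dualObjective E c ε w = 2 * rowEntropy xs := by
  have hbdd : BddBelow (range (dualObjective E c ε)) := ⟨2 * rowEntropy xs, by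
    rintro _ ⟨w, rfl⟩
    exact two_mul_rowEntropy_le_dualObjective hxs w⟩
  refine le_antisymm (le_of_forall_pos_le_add fun δ hδ => ?_)
    (le_ciInf (two_mul_rowEntropy_le_dualObjective hxs))
  obtain ⟨w, hw⟩ := exists_dualObjective_le hxs (isMaxOn_iff.1 hmax) hδ
  exact (ciInf_le hbdd w).trans hw

noncomputable def rowLoss (x xt : Fin n → ℝ) : ℝ := (1 / (n : ℝ)) * ∑ i, bitXent (x i) (xt i)

lemma avg_xent_eq_sum_rowLoss {V : ℕ} (X Xt : Fin V → Fin n → ℝ) :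
    (1 / (n : ℝ)) * ∑ i, xent (fun v => X v i) (fun v => Xt v i) =
      ∑ v, rowLoss (X v) (Xt v) := by
  simp only [xent, rowLoss, Finset.mul_sum]
  exact Finset.sum_comm

lemma rowEntropy_le_rowLoss {x xt : Fin n → ℝ} (hx : x ∈ cube n)
    (hxt : ∀ i, xt i ∈ Ioo (-1) 1) : rowEntropy x ≤ rowLoss x xt := by
  unfold rowEntropy rowLoss
  gcongr with i
  exact bitEntropy_le_bitXent (hx i trivial) (hxt i)

lemma rowLoss_tanhHalf (E : Fin H → Fin n → ℝ) (x : Fin n → ℝ) (w : Fin H → ℝ) :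
    rowLoss x (fun i => tanhHalf (margin E w i)) = lagrangian E x w / 2 := by
  simp only [rowLoss, lagrangian, bitXent_tanhHalf, mul_div_assoc, Finset.sum_div]

lemma exists_forall_sum_rowLoss_le {V : ℕ} {Xt : Fin V → Fin n → ℝ}
    (hXt : ∀ v i, Xt v i ∈ Ioo (-1) 1) :
    ∃ C, ∀ X : Fin V → Fin n → ℝ, (∀ v, X v ∈ cube n) → ∑ v, rowLoss (X v) (Xt v) ≤ C :=
  ⟨∑ v, (1 / (n : ℝ)) * ∑ i, (log (2 / (1 + Xt v i)) + log (2 / (1 - Xt v i))),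
    fun X hX => Finset.sum_le_sum fun v _ => by
      unfold rowLoss
      gcongr with i
      exact bitXent_le (hX v i trivial) (hXt v i)⟩

lemma exists_forall_sum_rowLoss_le_add {V : ℕ} {E : Fin H → Fin n → ℝ}
    {B : Fin V → Fin H → ℝ} {eps : Fin V → ℝ} {xs : Fin V → Fin n → ℝ}
    (hxs : ∀ v, xs v ∈ feasibleRows E (B v) (eps v))
    (hmax : ∀ v, IsMaxOn rowEntropy (feasibleRows E (B v) (eps v)) (xs v)) {e : ℝ}
    (he : 0 < e) :
    ∃ Xt : Fin V → Fin n → ℝ, (∀ v i, Xt v i ∈ Ioo (-1) 1) ∧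
      ∀ X : Fin V → Fin n → ℝ, (∀ v, X v ∈ feasibleRows E (B v) (eps v)) →
        ∑ v, rowLoss (X v) (Xt v) ≤ ∑ v, rowEntropy (xs v) + e := by
  choose w hw using fun v =>
    exists_dualObjective_le (hxs v) (isMaxOn_iff.1 (hmax v)) (δ := 2 * (e / (V + 1)))
      (by positivity)
  refine ⟨fun v i => tanhHalf (margin E (w v) i), fun v i => tanhHalf_mem _, fun X hX => ?_⟩
  have hVe : (V : ℝ) * (e / (V + 1)) ≤ e := by
    rw [mul_div_assoc', div_le_iff₀ (by positivity)]
    linarith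
  calc ∑ v, rowLoss (X v) (fun i => tanhHalf (margin E (w v) i))
      = ∑ v, lagrangian E (X v) (w v) / 2 := by simp only [rowLoss_tanhHalf]
    _ ≤ ∑ v, (rowEntropy (xs v) + e / (V + 1)) := Finset.sum_le_sum fun v _ => by
        linarith [lagrangian_le_dualObjective (hX v).2 (w v), hw v]
    _ ≤ ∑ v, rowEntropy (xs v) + e := by
        rw [Finset.sum_add_distrib, Finset.sum_const, Finset.card_univ, Fintype.card_fin,
          nsmul_eq_mul]
        linarith

end CrossEntropyMinimax

open CrossEntropyMinimax

theorem minimax_relaxed_constraints_l1_regularization_general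
    (n V H : ℕ)
    (E : Fin H → Fin n → ℝ)
    (B : Fin V → Fin H → ℝ)
    (eps : Fin V → ℝ)
    (hfeas : ∃ X : Fin V → Fin n → ℝ,
      (∀ v i, X v i ∈ Set.Icc (-1 : ℝ) 1) ∧
      ∀ v h, |(1 / (n : ℝ)) * (∑ i, E h i * X v i) - B v h| ≤ eps v) :
    (⨅ Xt : {Xt : Fin V → Fin n → ℝ // ∀ v i, Xt v i ∈ Set.Ioo (-1 : ℝ) 1},
      ⨆ X : {X : Fin V → Fin n → ℝ //
          (∀ v i, X v i ∈ Set.Icc (-1 : ℝ) 1) ∧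
          ∀ v h, |(1 / (n : ℝ)) * (∑ i, E h i * X v i) - B v h| ≤ eps v},
        (1 / (n : ℝ)) * ∑ i, xent (fun v => X.1 v i) (fun v => Xt.1 v i))
      = (1 / 2) * ∑ v, ⨅ w : Fin H → ℝ,
          (-(∑ h, B v h * w h) + (1 / (n : ℝ)) * (∑ i, Psi (∑ h, w h * E h i))
            + eps v * ∑ h, |w h|) := by
  have hrows : ∀ X : Fin V → Fin n → ℝ, ((∀ v i, X v i ∈ Set.Icc (-1 : ℝ) 1) ∧
      ∀ v h, |(1 / (n : ℝ)) * (∑ i, E h i * X v i) - B v h| ≤ eps v) →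
      ∀ v, X v ∈ feasibleRows E (B v) (eps v) := fun X hX v => ⟨fun i _ => hX.1 v i, hX.2 v⟩
  obtain ⟨X₀, hX₀⟩ := hfeas
  choose xs hxs hmax using fun v => (isCompact_feasibleRows E (B v) (eps v)).exists_isMaxOn
    ⟨X₀ v, hrows X₀ hX₀ v⟩ (continuous_rowEntropy n).continuousOn
  have hRHS : (1 / 2) * ∑ v, ⨅ w, dualObjective E (B v) (eps v) w = ∑ v, rowEntropy (xs v) := by
    simp only [iInf_dualObjective_eq (hxs _) (hmax _), ← Finset.mul_sum]
    ring
  have : Nonempty {Xt : Fin V → Fin n → ℝ // ∀ v i, Xt v i ∈ Set.Ioo (-1 : ℝ) 1} :=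
    ⟨⟨0, fun _ _ => by norm_num⟩⟩
  refine (ciInf_ciSup_eq_of_forall_le (fun Xt => ?_) ?_ fun e he => ?_).trans hRHS.symm
  · obtain ⟨C, hC⟩ := exists_forall_sum_rowLoss_le Xt.2
    refine ⟨C, ?_⟩
    rintro _ ⟨X, rfl⟩
    exact (avg_xent_eq_sum_rowLoss _ _).trans_le (hC X.1 fun v => (hrows X.1 X.2 v).1)
  · refine ⟨⟨xs, fun v i => (hxs v).1 i trivial, fun v => (hxs v).2⟩, fun Xt => ?_⟩
    rw [avg_xent_eq_sum_rowLoss]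
    exact Finset.sum_le_sum fun v _ => rowEntropy_le_rowLoss (hxs v).1 (Xt.2 v)
  · obtain ⟨Xt, hXt, hle⟩ := exists_forall_sum_rowLoss_le_add hxs hmax he
    exact ⟨⟨Xt, hXt⟩, fun X => (avg_xent_eq_sum_rowLoss _ _).trans_le (hle X.1 (hrows X.1 X.2))⟩

/-- With `L∞`-relaxed correlation constraints `‖(1/n)·E·x_v - b_v‖_∞ ≤ ε_v`, the minimax
value equals the bitwise minimized slack function with `L1` weight regularization
`ε_v·‖w‖₁`. -/
theorem minimax_relaxed_constraints_l1_regularization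
    (n V H : ℕ) (hn : 0 < n) (hV : 0 < V) (hH : 0 < H)
    (E : Fin H → Fin n → ℝ) (hE : ∀ h i, E h i ∈ Set.Icc (-1 : ℝ) 1)
    (B : Fin V → Fin H → ℝ)
    (eps : Fin V → ℝ) (heps : ∀ v, 0 ≤ eps v)
    (hfeas : ∃ X : Fin V → Fin n → ℝ,
      (∀ v i, X v i ∈ Set.Icc (-1 : ℝ) 1) ∧
      ∀ v h, |(1 / (n : ℝ)) * (∑ i, E h i * X v i) - B v h| ≤ eps v) :
    (⨅ Xt : {Xt : Fin V → Fin n → ℝ // ∀ v i, Xt v i ∈ Set.Ioo (-1 : ℝ) 1},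
      ⨆ X : {X : Fin V → Fin n → ℝ //
          (∀ v i, X v i ∈ Set.Icc (-1 : ℝ) 1) ∧
          ∀ v h, |(1 / (n : ℝ)) * (∑ i, E h i * X v i) - B v h| ≤ eps v},
        (1 / (n : ℝ)) * ∑ i, xent (fun v => X.1 v i) (fun v => Xt.1 v i))
      = (1 / 2) * ∑ v, ⨅ w : Fin H → ℝ,
          (-(∑ h, B v h * w h) + (1 / (n : ℝ)) * (∑ i, Psi (∑ h, w h * E h i))
            + eps v * ∑ h, |w h|) :=
  minimax_relaxed_constraints_l1_regularization_general n V H E B eps hfeas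
end
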